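/- arXiv:2408.17195 — 7 statements merged into one kernel-verified Lean document; each statement's English description precedes it below -/
import Mathlib

section
/- Let (S', θ, N) be modular data with η = p⁺/δ. Then for all labels X, Y, Z: Σ_{V∈I} (θ_V/θ_X) S'_{YV} N^Z_{VX} = Σ_{V∈I} (θ_V/θ_Y) S'_{XV} N^Z_{VY}. In other words, the quantity θ_X^{-1} Σ_V θ_V S'_{YV} N^Z_{VX} is symmetric under exchanging X and Y. -/
/-- The quantity `θ_X⁻¹ Σ_V θ_V S'_{YV} N^Z_{VX}` coming from modular data is
symmetric under exchanging `X` and `Y`: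
`Σ_V (θ_V/θ_X) S'_{YV} N^Z_{VX} = Σ_V (θ_V/θ_Y) S'_{XV} N^Z_{VY}`. -/
theorem twisted_sum_symmetric {I : Type} [Fintype I] [DecidableEq I]
    (one : I) (bar : I → I) (S : Matrix I I ℂ) (d : I → ℝ) (δ : ℝ)
    (θ : I → ℂ) (N : I → I → I → ℕ) (η : ℂ)
    (hbar : ∀ X, bar (bar X) = X) (hbar1 : bar one = one)
    (hSsymm : S.IsSymm)
    (hd : ∀ X, 0 < d X) (hS1 : ∀ X, S one X = (d X : ℂ))
    (hδ : 0 < δ) (hδ2 : δ ^ 2 = ∑ X, d X ^ 2)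
    (hunit : S * S.conjTranspose = ((δ : ℂ) ^ 2) • 1)
    (hθ1 : θ one = 1) (hθbar : ∀ X, θ (bar X) = θ X) (hθne : ∀ X, θ X ≠ 0)
    (hver : ∀ X Y Z, (N X Y Z : ℂ) =
      (∑ W, S X W * S Y W * (starRingEnd ℂ) (S Z W) / (d W : ℂ)) / (δ : ℂ) ^ 2)
    (hη_def : η = (∑ X, θ X * (d X : ℂ) ^ 2) / (δ : ℂ))
    (hs4 : S ^ 4 = ((δ : ℂ) ^ 4) • 1)
    (hst3 : (S * Matrix.diagonal θ) ^ 3 = (η⁻¹ * (δ : ℂ)) • S ^ 2) :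
    ∀ X Y Z, ∑ V, θ V / θ X * S Y V * (N V X Z : ℂ)
      = ∑ V, θ V / θ Y * S X V * (N V Y Z : ℂ) := by
  set T := Matrix.diagonal θ with hT
  set c : ℂ := η⁻¹ * (δ : ℂ) with hc
  have hδC : ((δ : ℂ) ^ 4) ≠ 0 := by
    have : (δ : ℂ) ≠ 0 := by exact_mod_cast hδ.ne'
    exact pow_ne_zero _ this
  -- S is invertible
  haveI : Invertible S := by
    refine ⟨((δ : ℂ) ^ 4)⁻¹ • S ^ 3, ?_, ?_⟩
    · rw [Matrix.smul_mul, ← pow_succ, hs4, smul_smul, inv_mul_cancel₀ hδC, one_smul]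
    · rw [Matrix.mul_smul, ← pow_succ', hs4, smul_smul, inv_mul_cancel₀ hδC, one_smul]
  -- key matrix identity: T * S * T * S * T = c • S
  have key : T * S * T * S * T = c • S := by
    have h1 : S * (T * S * T * S * T) = S * (c • S) := by
      have e1 : S * (T * S * T * S * T) = (S * T) ^ 3 := by
        simp [pow_succ, mul_assoc, pow_one]
      rw [e1, hst3, Matrix.mul_smul, pow_two]
    calc T * S * T * S * T = ⅟S * (S * (T * S * T * S * T)) := by
          rw [← mul_assoc, invOf_mul_self, one_mul]
      _ = ⅟S * (S * (c • S)) := by rw [h1]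
      _ = c • S := by rw [← mul_assoc, invOf_mul_self, one_mul]
  -- entrywise form of the key identity
  have entry : ∀ Y W, ∑ V, S Y V * θ V * S V W = c * S Y W / (θ Y * θ W) := by
    intro Y W
    have h2 := congrFun (congrFun key Y) W
    have e2 : (T * S * T * S * T) Y W = θ Y * (∑ V, S Y V * θ V * S V W) * θ W := by
      have : T * S * T * S * T = T * ((S * T) * S) * T := by
        simp [mul_assoc]
      rw [this, hT, Matrix.mul_diagonal, Matrix.diagonal_mul, Matrix.mul_apply]
      simp only [Matrix.mul_diagonal]
    rw [e2] at h2
    have h3 : (c • S) Y W = c * S Y W := rfl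
    rw [h3] at h2
    rw [eq_div_iff (mul_ne_zero (hθne Y) (hθne W))]
    linear_combination h2
  intro X Y Z
  -- both sides equal a manifestly symmetric expression
  have sumform : ∀ A B : I, ∑ V, θ V / θ A * S B V * (N V A Z : ℂ)
      = ∑ W, c * (S B W * S A W * (starRingEnd ℂ) (S Z W))
          / (θ A * θ B * θ W * (d W : ℂ) * (δ : ℂ) ^ 2) := by
    intro A B
    have step1 : ∀ V, θ V / θ A * S B V * (N V A Z : ℂ)
        = ∑ W, S B V * θ V * S V W *
            (S A W * (starRingEnd ℂ) (S Z W) / (θ A * (d W : ℂ) * (δ : ℂ) ^ 2)) := by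
      intro V
      rw [hver V A Z, Finset.sum_div, Finset.mul_sum]
      refine Finset.sum_congr rfl fun W _ => ?_
      ring
    calc ∑ V, θ V / θ A * S B V * (N V A Z : ℂ)
        = ∑ V, ∑ W, S B V * θ V * S V W *
            (S A W * (starRingEnd ℂ) (S Z W) / (θ A * (d W : ℂ) * (δ : ℂ) ^ 2)) := by
          exact Finset.sum_congr rfl fun V _ => step1 V
      _ = ∑ W, ∑ V, S B V * θ V * S V W *
            (S A W * (starRingEnd ℂ) (S Z W) / (θ A * (d W : ℂ) * (δ : ℂ) ^ 2)) :=
          Finset.sum_comm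
      _ = ∑ W, (∑ V, S B V * θ V * S V W) *
            (S A W * (starRingEnd ℂ) (S Z W) / (θ A * (d W : ℂ) * (δ : ℂ) ^ 2)) := by
          refine Finset.sum_congr rfl fun W _ => ?_
          rw [Finset.sum_mul]
      _ = ∑ W, c * (S B W * S A W * (starRingEnd ℂ) (S Z W))
            / (θ A * θ B * θ W * (d W : ℂ) * (δ : ℂ) ^ 2) := by
          refine Finset.sum_congr rfl fun W _ => ?_
          rw [entry B W]
          ring
  rw [sumform X Y, sumform Y X]
  refine Finset.sum_congr rfl fun W _ => ?_
  ring
end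

section
/- Let (S', θ, N) be modular data with η = p⁺/δ. Then for all labels X, Y, Z: Σ_{V∈I} θ_V S'_{YV} N^Z_{VX} = η^{-1} θ_Y^{-1} δ^{-1} Σ_{W∈I} S'_{XW} S'_{YW} conj(S'_{ZW}) θ_W^{-1} / d_W (a 'twisted Verlinde formula'). -/
/-- Twisted Verlinde formula:
`Σ_V θ_V S'_{YV} N^Z_{VX} = η⁻¹ θ_Y⁻¹ δ⁻¹ Σ_W S'_{XW} S'_{YW} conj(S'_{ZW}) θ_W⁻¹ / d_W`. -/
theorem twisted_verlinde {I : Type} [Fintype I] [DecidableEq I]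
    (one : I) (bar : I → I) (S : Matrix I I ℂ) (d : I → ℝ) (δ : ℝ)
    (θ : I → ℂ) (N : I → I → I → ℕ) (η : ℂ)
    (hbar : ∀ X, bar (bar X) = X) (hbar1 : bar one = one)
    (hSsymm : S.IsSymm)
    (hd : ∀ X, 0 < d X) (hS1 : ∀ X, S one X = (d X : ℂ))
    (hδ : 0 < δ) (hδ2 : δ ^ 2 = ∑ X, d X ^ 2)
    (hunit : S * S.conjTranspose = ((δ : ℂ) ^ 2) • 1)
    (hθ1 : θ one = 1) (hθbar : ∀ X, θ (bar X) = θ X) (hθne : ∀ X, θ X ≠ 0)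
    (hver : ∀ X Y Z, (N X Y Z : ℂ) =
      (∑ W, S X W * S Y W * (starRingEnd ℂ) (S Z W) / (d W : ℂ)) / (δ : ℂ) ^ 2)
    (hη_def : η = (∑ X, θ X * (d X : ℂ) ^ 2) / (δ : ℂ))
    (hs4 : S ^ 4 = ((δ : ℂ) ^ 4) • 1)
    (hst3 : (S * Matrix.diagonal θ) ^ 3 = (η⁻¹ * (δ : ℂ)) • S ^ 2) :
    ∀ X Y Z, ∑ V, θ V * S Y V * (N V X Z : ℂ)
      = η⁻¹ * (θ Y)⁻¹ * ((δ : ℂ))⁻¹ *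
        ∑ W, S X W * S Y W * (starRingEnd ℂ) (S Z W) * (θ W)⁻¹ / (d W : ℂ) := by

  intro X Y Z
  have hδne : (δ : ℂ) ≠ 0 := by exact_mod_cast hδ.ne'
  set T : Matrix I I ℂ := Matrix.diagonal θ with hT
  set T' : Matrix I I ℂ := Matrix.diagonal (fun i => (θ i)⁻¹) with hT'
  set S' : Matrix I I ℂ := ((δ : ℂ) ^ 4)⁻¹ • S ^ 3 with hS'
  have hSS' : S * S' = 1 := by
    rw [hS', Matrix.mul_smul, ← pow_succ', hs4, smul_smul,
      inv_mul_cancel₀ (pow_ne_zero 4 hδne), one_smul]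
  have hS'S : S' * S = 1 := by
    rw [hS', Matrix.smul_mul, ← pow_succ, hs4, smul_smul,
      inv_mul_cancel₀ (pow_ne_zero 4 hδne), one_smul]
  have hTT' : T * T' = 1 := by
    rw [hT, hT', Matrix.diagonal_mul_diagonal]
    convert Matrix.diagonal_one
    exact mul_inv_cancel₀ (hθne _)
  have hT'T : T' * T = 1 := by
    rw [hT, hT', Matrix.diagonal_mul_diagonal]
    convert Matrix.diagonal_one
    exact inv_mul_cancel₀ (hθne _)
  have c1 : ∀ M : Matrix I I ℂ, S' * (S * M) = M := fun M => by
    rw [← mul_assoc, hS'S, one_mul]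
  have c2 : ∀ M : Matrix I I ℂ, S * (S' * M) = M := fun M => by
    rw [← mul_assoc, hSS', one_mul]
  have c3 : ∀ M : Matrix I I ℂ, T * (T' * M) = M := fun M => by
    rw [← mul_assoc, hTT', one_mul]
  have c4 : ∀ M : Matrix I I ℂ, T' * (T * M) = M := fun M => by
    rw [← mul_assoc, hT'T, one_mul]
  have key : S * (T * S) = (η⁻¹ * (δ : ℂ)) • (T' * (S * T')) := by
    have h : T' * (S' * ((S * T) ^ 3 * T')) =
        T' * (S' * ((η⁻¹ * (δ : ℂ)) • S ^ 2 * T')) := by rw [hst3]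
    have e2 : (S * T) ^ 3 = S * (T * (S * (T * (S * T)))) := by
      simp only [pow_succ, pow_zero, one_mul, mul_assoc]
    rw [e2] at h
    simp only [Matrix.smul_mul, Matrix.mul_smul, mul_assoc, pow_two] at h
    simp only [c1, c2, c3, c4, hTT', hT'T, hSS', hS'S, mul_one] at h
    exact h
  have keypt : ∀ W, (∑ V, θ V * S Y V * S V W)
      = η⁻¹ * (δ : ℂ) * ((θ Y)⁻¹ * S Y W * (θ W)⁻¹) := by
    intro W
    have hk := congrFun (congrFun key Y) W
    rw [hT, hT'] at hk
    have L : (S * (Matrix.diagonal θ * S)) Y W = ∑ V, θ V * S Y V * S V W := by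
      rw [← mul_assoc, Matrix.mul_apply]
      exact Finset.sum_congr rfl fun V _ => by rw [Matrix.mul_diagonal]; ring
    have R : ((Matrix.diagonal fun i => (θ i)⁻¹) *
        (S * Matrix.diagonal fun i => (θ i)⁻¹)) Y W
        = (θ Y)⁻¹ * S Y W * (θ W)⁻¹ := by
      rw [Matrix.diagonal_mul, Matrix.mul_diagonal, mul_assoc]
    rw [L, Matrix.smul_apply, R, smul_eq_mul] at hk
    exact hk
  have hdd : (δ : ℂ) * (((δ : ℂ) ^ 2)⁻¹) = ((δ : ℂ))⁻¹ := by
    rw [pow_two, mul_inv, ← mul_assoc, mul_inv_cancel₀ hδne, one_mul]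
  calc ∑ V, θ V * S Y V * (N V X Z : ℂ)
      = ∑ V, ∑ W, θ V * (S Y V * (S V W * (S X W * ((starRingEnd ℂ) (S Z W) *
          ((d W : ℂ))⁻¹ * ((δ : ℂ) ^ 2)⁻¹)))) := by
        refine Finset.sum_congr rfl fun V _ => ?_
        rw [hver, div_eq_mul_inv, Finset.sum_mul, Finset.mul_sum]
        refine Finset.sum_congr rfl fun W _ => ?_
        rw [div_eq_mul_inv]; ring
    _ = ∑ W, (∑ V, θ V * S Y V * S V W) *
          (S X W * (starRingEnd ℂ) (S Z W) * ((d W : ℂ))⁻¹ * ((δ : ℂ) ^ 2)⁻¹) := by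
        rw [Finset.sum_comm]
        refine Finset.sum_congr rfl fun W _ => ?_
        rw [Finset.sum_mul]
        exact Finset.sum_congr rfl fun V _ => by ring
    _ = ∑ W, η⁻¹ * (δ : ℂ) * ((θ Y)⁻¹ * S Y W * (θ W)⁻¹) *
          (S X W * (starRingEnd ℂ) (S Z W) * ((d W : ℂ))⁻¹ * ((δ : ℂ) ^ 2)⁻¹) := by
        exact Finset.sum_congr rfl fun W _ => by rw [keypt]
    _ = η⁻¹ * (θ Y)⁻¹ * ((δ : ℂ))⁻¹ *
        ∑ W, S X W * S Y W * (starRingEnd ℂ) (S Z W) * (θ W)⁻¹ / (d W : ℂ) := by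
        rw [Finset.mul_sum]
        refine Finset.sum_congr rfl fun W _ => ?_
        rw [div_eq_mul_inv]
        calc η⁻¹ * (δ : ℂ) * ((θ Y)⁻¹ * S Y W * (θ W)⁻¹) *
              (S X W * (starRingEnd ℂ) (S Z W) * ((d W : ℂ))⁻¹ * ((δ : ℂ) ^ 2)⁻¹)
            = ((δ : ℂ) * ((δ : ℂ) ^ 2)⁻¹) * (η⁻¹ * ((θ Y)⁻¹ * (S Y W * (θ W)⁻¹ *
              (S X W * (starRingEnd ℂ) (S Z W) * ((d W : ℂ))⁻¹)))) := by ring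
          _ = _ := by rw [hdd]; ring
end

section
/- With the gauged dimensions d_{(XY)} = 2d_X d_Y (X ≠ Y unordered), d_{(X,ε)} = d_X², d_{(X̂,ε)} = δ d_X, and the gauged twists θ_{(XY)} = θ_X θ_Y, θ_{(X,ε)} = θ_X², θ_{(X̂,ε)} = ε η^{1/2} θ_X^{1/2}, the Gauss sum of the gauged theory equals Σ_ℓ d_ℓ² θ_ℓ = 2 (p⁺)², where p⁺ = Σ_{X∈I} θ_X d_X². Consequently, the normalized Gauss sum of the gauged theory satisfies η_eq := 2(p⁺)²/(2μ) = η² where η = p⁺/δ. -/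
/-!
Write `p⁺ = ∑ X, θ_X d_X²`. The twisted sectors `(X̂, ±)` have the same dimension and opposite
twists, so they cancel in pairs. Each of the remaining sectors contributes twice a term of
`(p⁺)²`: the two sectors `(X, ±)` give `2 (θ_X d_X²)²`, and the unordered pair `(XY)` gives
`4 d_X² d_Y² θ_X θ_Y`, i.e. twice the sum of the two ordered off-diagonal terms
`(θ_X d_X²)(θ_Y d_Y²)`. The result is twice the diagonal-plus-off-diagonal expansion of `(p⁺)²`.
-/

open Finset

lemma Finset.sq_sum_eq_sum_sq_add_sum_offDiag {ι R : Type*} [Fintype ι] [DecidableEq ι]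
    [CommSemiring R] (f : ι → R) :
    (∑ i, f i) ^ 2 = ∑ i, f i ^ 2 + ∑ p ∈ univ.offDiag, f p.1 * f p.2 := by
  rw [sq, sum_mul_sum, ← sum_product', ← diag_union_offDiag,
    sum_union (disjoint_diag_offDiag _), sum_diag]
  simp only [sq]

lemma sum_bool_sign_mul_eq_zero {R : Type*} [CommRing R] (c x : R) :
    ∑ ε : Bool, c * ((if ε then 1 else -1) * x) = 0 := by
  simp

theorem gauged_gauss_sum_general {I : Type} [Fintype I] [DecidableEq I]
    (d : I → ℝ) (δ : ℝ) (θ : I → ℂ) (sqrtη : ℂ) (sqrtθ : I → ℂ)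
    (hδ : 0 < δ) :
    ((∑ p ∈ Finset.univ.offDiag, (2 * (d p.1 : ℂ) * (d p.2 : ℂ)) ^ 2 * (θ p.1 * θ p.2)) / 2
      + (∑ X, ∑ _ε : Bool, ((d X : ℂ) ^ 2) ^ 2 * (θ X) ^ 2)
      + (∑ X, ∑ ε : Bool, ((δ : ℂ) * (d X : ℂ)) ^ 2 *
          ((if ε then 1 else -1) * sqrtη * sqrtθ X))
      = 2 * (∑ X, θ X * (d X : ℂ) ^ 2) ^ 2)
    ∧ 2 * (∑ X, θ X * (d X : ℂ) ^ 2) ^ 2 / (2 * (δ : ℂ) ^ 2)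
      = ((∑ X, θ X * (d X : ℂ) ^ 2) / (δ : ℂ)) ^ 2 := by
  set w : I → ℂ := fun X ↦ θ X * (d X : ℂ) ^ 2
  have untwisted : ∀ X, ∑ _ε : Bool, ((d X : ℂ) ^ 2) ^ 2 * θ X ^ 2 = 2 * w X ^ 2 := fun X ↦ by
    simp only [Fintype.sum_bool, w]
    ring
  have pairs : ∀ p ∈ (univ : Finset I).offDiag,
      (2 * (d p.1 : ℂ) * (d p.2 : ℂ)) ^ 2 * (θ p.1 * θ p.2) / 2 = 2 * (w p.1 * w p.2) :=
    fun p _ ↦ by simp only [w]; ring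
  have twisted : ∀ X, ∑ ε : Bool, ((δ : ℂ) * (d X : ℂ)) ^ 2 *
      ((if ε then 1 else -1) * sqrtη * sqrtθ X) = 0 := fun X ↦ by
    simp only [mul_assoc, sum_bool_sign_mul_eq_zero]
  refine ⟨?_, ?_⟩
  · rw [sum_div, sum_congr rfl pairs, sum_congr rfl fun X _ ↦ untwisted X,
      sum_congr rfl fun X _ ↦ twisted X, sq_sum_eq_sum_sq_add_sum_offDiag, ← mul_sum, ← mul_sum]
    simp only [sum_const_zero]
    ring
  · have hδ0 : (δ : ℂ) ≠ 0 := by exact_mod_cast hδ.ne'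
    field_simp

/-- The Gauss sum of the ℤ/2 permutation gauging equals `2(p⁺)²`, and hence its
normalized Gauss sum is `2(p⁺)²/(2μ) = η²` where `η = p⁺/δ`. The gauged labels
are unordered pairs `(XY)`, `X ≠ Y` (written as half the sum over ordered
off-diagonal pairs), and `(X,ε)`, `(X̂,ε)` with `ε ∈ {±}`. -/
theorem gauged_gauss_sum {I : Type} [Fintype I] [DecidableEq I]
    (d : I → ℝ) (δ : ℝ) (θ : I → ℂ) (sqrtη : ℂ) (sqrtθ : I → ℂ)
    (hd : ∀ X, 0 < d X) (hδ : 0 < δ) (hδ2 : δ ^ 2 = ∑ X, d X ^ 2)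
    (hθne : ∀ X, θ X ≠ 0)
    (hsqη : sqrtη ^ 2 = (∑ X, θ X * (d X : ℂ) ^ 2) / (δ : ℂ))
    (hsqθ : ∀ X, sqrtθ X ^ 2 = θ X) :
    ((∑ p ∈ Finset.univ.offDiag, (2 * (d p.1 : ℂ) * (d p.2 : ℂ)) ^ 2 * (θ p.1 * θ p.2)) / 2
      + (∑ X, ∑ _ε : Bool, ((d X : ℂ) ^ 2) ^ 2 * (θ X) ^ 2)
      + (∑ X, ∑ ε : Bool, ((δ : ℂ) * (d X : ℂ)) ^ 2 *
          ((if ε then 1 else -1) * sqrtη * sqrtθ X))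
      = 2 * (∑ X, θ X * (d X : ℂ) ^ 2) ^ 2)
    ∧ 2 * (∑ X, θ X * (d X : ℂ) ^ 2) ^ 2 / (2 * (δ : ℂ) ^ 2)
      = ((∑ X, θ X * (d X : ℂ) ^ 2) / (δ : ℂ)) ^ 2 :=
  gauged_gauss_sum_general d δ θ sqrtη sqrtθ hδ
end

section
/- Applying the Verlinde formula to the gauged modular data S^eq (normalized by 2μ) for three labels of type (Z,ε) gives: N_{(Z₁,ε₁),(Z₂,ε₂),(Z₃,ε₃)} = ½ N_{Z₁Z₂Z₃}(N_{Z₁Z₂Z₃} + ε₁ε₂ε₃), where N_{Z₁Z₂Z₃} = Σ_{W∈I} S'_{Z₁W} S'_{Z₂W} S'_{Z₃W} / (μ d_W) is the symmetric fusion multiplicity of the original theory. -/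
/-!
Evaluating `S^eq` against the gauged unit `(1,+)` gives the gauged dimensions
`d^eq_{(XY)} = 2 d_X d_Y`, `d^eq_{(X,ε)} = d_X²` and `d^eq_{(X̂,ε)} = δ d_X`. With
`f_W = S'_{Z₁W} S'_{Z₂W} S'_{Z₃W} / (δ² d_W)`, the three blocks of gauged labels then contribute
`Σ_{X<Y} f_X f_Y`, `Σ_W f_W² / 2` and `ε₁ε₂ε₃ Σ_W f_W / 2` to the Verlinde sum, and the first two
add up to `N²/2` with `N = Σ_W f_W`, because `(Σ_W f_W)² = Σ_W f_W² + 2 Σ_{X<Y} f_X f_Y`.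
-/

/-- Gauged labels of the ℤ/2 permutation gauging: unordered pairs `(XY)` with
`X ≠ Y` (modelled as pairs with `X < Y`), labels `(X,ε)`, and labels `(X̂,ε)`. -/
abbrev GLabel (I : Type) [LinearOrder I] : Type :=
  {p : I × I // p.1 < p.2} ⊕ (I × Bool) ⊕ (I × Bool)

/-- The sign `ε ∈ {+1, -1}` as a complex number. -/
def sg (ε : Bool) : ℂ := if ε then 1 else -1

/-- The gauged S-matrix `S^eq`, defined blockwise from modular data
`(S', θ)`, a choice of square roots `θ^{1/2}`, `δ = √μ` and `η = p⁺/δ`. -/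
noncomputable def gaugedS {I : Type} [LinearOrder I] [Fintype I]
    (S : Matrix I I ℂ) (θ sqrtθ : I → ℂ) (δ η : ℂ) :
    Matrix (GLabel I) (GLabel I) ℂ :=
  Matrix.of fun a b =>
    match a, b with
    | Sum.inl p, Sum.inl q =>
        2 * (S p.1.1 q.1.1 * S p.1.2 q.1.2 + S p.1.1 q.1.2 * S p.1.2 q.1.1)
    | Sum.inl p, Sum.inr (Sum.inl (Z, _)) => 2 * S p.1.1 Z * S p.1.2 Z
    | Sum.inr (Sum.inl (X, _)), Sum.inl q => 2 * S X q.1.1 * S X q.1.2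
    | Sum.inl _, Sum.inr (Sum.inr _) => 0
    | Sum.inr (Sum.inr _), Sum.inl _ => 0
    | Sum.inr (Sum.inl (X, _)), Sum.inr (Sum.inl (Y, _)) => (S X Y) ^ 2
    | Sum.inr (Sum.inl (X, ε₁)), Sum.inr (Sum.inr (Y, _)) => sg ε₁ * δ * S X Y
    | Sum.inr (Sum.inr (X, _)), Sum.inr (Sum.inl (Y, ε₂)) => sg ε₂ * δ * S Y X
    | Sum.inr (Sum.inr (X, ε₁)), Sum.inr (Sum.inr (Y, ε₂)) =>
        sg ε₁ * sg ε₂ * η⁻¹ * sqrtθ X * sqrtθ Y * (∑ V, S X V * θ V ^ 2 * S V Y)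

theorem sq_sum_eq_sum_sq_add_two_mul_sum_lt {ι R : Type*} [LinearOrder ι] [Fintype ι]
    [CommSemiring R] (f : ι → R) :
    (∑ i, f i) ^ 2 = ∑ i, f i ^ 2 + 2 * ∑ p : {p : ι × ι // p.1 < p.2}, f p.1.1 * f p.1.2 := by
  classical
  have hlt : ∑ p : {p : ι × ι // p.1 < p.2}, f p.1.1 * f p.1.2
      = ∑ i, ∑ j, if i < j then f i * f j else 0 := by
    rw [← Finset.sum_product', Finset.univ_product_univ, ← Finset.sum_filter,
      ← Finset.sum_subtype_eq_sum_filter, Finset.subtype_univ]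
  have hgt : ∑ i, ∑ j, (if j < i then f i * f j else 0)
      = ∑ i, ∑ j, if i < j then f i * f j else 0 := by
    rw [Finset.sum_comm]
    simp_rw [mul_comm]
  calc (∑ i, f i) ^ 2 = ∑ i, ∑ j, f i * f j := by rw [sq, Finset.sum_mul_sum]
    _ = ∑ i, ∑ j, ((if i < j then f i * f j else 0) + (if i = j then f i * f j else 0)
          + (if j < i then f i * f j else 0)) := by
        refine Fintype.sum_congr _ _ fun i => Fintype.sum_congr _ _ fun j => ?_
        rcases lt_trichotomy i j with h | rfl | h
        · simp [h, h.ne, h.not_gt]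
        · simp
        · simp [h, h.ne', h.not_gt]
    _ = _ := by
        simp only [Finset.sum_add_distrib, Finset.sum_ite_eq, Finset.mem_univ, if_true, hgt, hlt,
          sq]
        ring

section GaugedVerlinde

variable {I : Type} [LinearOrder I] [Fintype I] (S : Matrix I I ℂ) (θ sqrtθ : I → ℂ) (δ η : ℂ)
  (one : I) (d : I → ℂ)

noncomputable def verlindeTerm (Z₁ Z₂ Z₃ W : I) : ℂ :=
  S Z₁ W * S Z₂ W * S Z₃ W / (δ ^ 2 * d W)

noncomputable def gaugedVerlindeTerm (a b c ℓ : GLabel I) : ℂ :=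
  gaugedS S θ sqrtθ δ η a ℓ * gaugedS S θ sqrtθ δ η b ℓ * gaugedS S θ sqrtθ δ η c ℓ /
    ((2 * δ ^ 2) ^ 2 * gaugedS S θ sqrtθ δ η ℓ (Sum.inr (Sum.inl (one, true))))

variable {S θ sqrtθ δ η one d} {Z₁ Z₂ Z₃ : I} {ε₁ ε₂ ε₃ : Bool}

theorem gaugedVerlindeTerm_inl (hd : ∀ X, S X one = d X) (p : {p : I × I // p.1 < p.2}) :
    gaugedVerlindeTerm S θ sqrtθ δ η one (Sum.inr (Sum.inl (Z₁, ε₁)))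
        (Sum.inr (Sum.inl (Z₂, ε₂))) (Sum.inr (Sum.inl (Z₃, ε₃))) (Sum.inl p) =
      verlindeTerm S δ d Z₁ Z₂ Z₃ p.1.1 * verlindeTerm S δ d Z₁ Z₂ Z₃ p.1.2 := by
  simp only [gaugedVerlindeTerm, gaugedS, Matrix.of_apply, verlindeTerm, hd]
  rw [div_mul_div_comm, eq_comm, ← mul_div_mul_left _ _ (by norm_num : (8 : ℂ) ≠ 0)]
  congr 1 <;> ring

theorem gaugedVerlindeTerm_inr_inl (hd : ∀ X, S X one = d X) (W : I) (ε : Bool) :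
    gaugedVerlindeTerm S θ sqrtθ δ η one (Sum.inr (Sum.inl (Z₁, ε₁)))
        (Sum.inr (Sum.inl (Z₂, ε₂))) (Sum.inr (Sum.inl (Z₃, ε₃))) (Sum.inr (Sum.inl (W, ε))) =
      verlindeTerm S δ d Z₁ Z₂ Z₃ W ^ 2 / 4 := by
  simp only [gaugedVerlindeTerm, gaugedS, Matrix.of_apply, verlindeTerm, hd]
  rw [div_pow, div_div]
  congr 1 <;> ring

theorem gaugedVerlindeTerm_inr_inr (hd : ∀ X, S one X = d X) (hδ : δ ≠ 0) (W : I) (ε : Bool) :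
    gaugedVerlindeTerm S θ sqrtθ δ η one (Sum.inr (Sum.inl (Z₁, ε₁)))
        (Sum.inr (Sum.inl (Z₂, ε₂))) (Sum.inr (Sum.inl (Z₃, ε₃))) (Sum.inr (Sum.inr (W, ε))) =
      sg ε₁ * sg ε₂ * sg ε₃ * verlindeTerm S δ d Z₁ Z₂ Z₃ W / 4 := by
  simp only [gaugedVerlindeTerm, gaugedS, Matrix.of_apply, verlindeTerm, hd]
  rw [mul_div_assoc', div_div, eq_comm, ← mul_div_mul_left _ _ (pow_ne_zero 3 hδ)]
  congr 1 <;> simp only [sg, if_true] <;> ring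

end GaugedVerlinde

theorem gauged_verlinde_diag_general {I : Type} [LinearOrder I] [Fintype I]
    (one : I) (S : Matrix I I ℂ) (d : I → ℝ) (δ : ℝ)
    (θ sqrtθ : I → ℂ) (η : ℂ)
    (hSsymm : S.IsSymm)
    (hS1 : ∀ X, S one X = (d X : ℂ))
    (hδ : 0 < δ) :
    ∀ (Z₁ Z₂ Z₃ : I) (ε₁ ε₂ ε₃ : Bool),
      ∑ ℓ : GLabel I,
          gaugedS S θ sqrtθ (δ : ℂ) η (Sum.inr (Sum.inl (Z₁, ε₁))) ℓ *
          gaugedS S θ sqrtθ (δ : ℂ) η (Sum.inr (Sum.inl (Z₂, ε₂))) ℓ *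
          gaugedS S θ sqrtθ (δ : ℂ) η (Sum.inr (Sum.inl (Z₃, ε₃))) ℓ /
          ((2 * (δ : ℂ) ^ 2) ^ 2 *
            gaugedS S θ sqrtθ (δ : ℂ) η ℓ (Sum.inr (Sum.inl (one, true))))
      = (∑ W, S Z₁ W * S Z₂ W * S Z₃ W / ((δ : ℂ) ^ 2 * (d W : ℂ))) *
          ((∑ W, S Z₁ W * S Z₂ W * S Z₃ W / ((δ : ℂ) ^ 2 * (d W : ℂ)))
            + sg ε₁ * sg ε₂ * sg ε₃) / 2 := by
  intro Z₁ Z₂ Z₃ ε₁ ε₂ ε₃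
  have hδ0 : (δ : ℂ) ≠ 0 := Complex.ofReal_ne_zero.2 hδ.ne'
  have hSone : ∀ X, S X one = d X := fun X => (hSsymm.apply one X).trans (hS1 X)
  have hsq := sq_sum_eq_sum_sq_add_two_mul_sum_lt (verlindeTerm S δ (fun X => (d X : ℂ)) Z₁ Z₂ Z₃)
  set N := ∑ W, verlindeTerm S δ (fun X => (d X : ℂ)) Z₁ Z₂ Z₃ W
  change ∑ ℓ, gaugedVerlindeTerm S θ sqrtθ δ η one _ _ _ ℓ = N * (N + _) / 2
  simp only [Fintype.sum_sum_type, Fintype.sum_prod_type, Fintype.sum_bool,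
    gaugedVerlindeTerm_inl hSone, gaugedVerlindeTerm_inr_inl hSone,
    gaugedVerlindeTerm_inr_inr hS1 hδ0]
  rw [Finset.sum_add_distrib, Finset.sum_add_distrib, ← Finset.sum_div, ← Finset.sum_div,
    ← Finset.mul_sum]
  linear_combination -hsq / 2

/-- Gauged Verlinde formula for three labels of type `(Z,ε)`:
`N_{(Z₁,ε₁),(Z₂,ε₂),(Z₃,ε₃)} = ½ N_{Z₁Z₂Z₃}(N_{Z₁Z₂Z₃} + ε₁ε₂ε₃)` where
`N_{Z₁Z₂Z₃} = Σ_W S'_{Z₁W}S'_{Z₂W}S'_{Z₃W}/(μ d_W)`. -/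
theorem gauged_verlinde_diag {I : Type} [LinearOrder I] [Fintype I]
    (one : I) (bar : I → I) (S : Matrix I I ℂ) (d : I → ℝ) (δ : ℝ)
    (θ sqrtθ : I → ℂ) (η : ℂ)
    (hbar : ∀ X, bar (bar X) = X) (hbar1 : bar one = one)
    (hSsymm : S.IsSymm)
    (hd : ∀ X, 0 < d X) (hS1 : ∀ X, S one X = (d X : ℂ))
    (hδ : 0 < δ) (hδ2 : δ ^ 2 = ∑ X, d X ^ 2)
    (hunit : S * S.conjTranspose = ((δ : ℂ) ^ 2) • 1)
    (hθ1 : θ one = 1) (hθbar : ∀ X, θ (bar X) = θ X) (hθne : ∀ X, θ X ≠ 0)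
    (hη_def : η = (∑ X, θ X * (d X : ℂ) ^ 2) / (δ : ℂ))
    (hηabs : ‖η‖ = 1)
    (hs4 : S ^ 4 = ((δ : ℂ) ^ 4) • 1)
    (hst3 : (S * Matrix.diagonal θ) ^ 3 = (η⁻¹ * (δ : ℂ)) • S ^ 2)
    (hsqθ : ∀ X, sqrtθ X ^ 2 = θ X) (hsqθbar : ∀ X, sqrtθ (bar X) = sqrtθ X) :
    ∀ (Z₁ Z₂ Z₃ : I) (ε₁ ε₂ ε₃ : Bool),
      ∑ ℓ : GLabel I,
          gaugedS S θ sqrtθ (δ : ℂ) η (Sum.inr (Sum.inl (Z₁, ε₁))) ℓ *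
          gaugedS S θ sqrtθ (δ : ℂ) η (Sum.inr (Sum.inl (Z₂, ε₂))) ℓ *
          gaugedS S θ sqrtθ (δ : ℂ) η (Sum.inr (Sum.inl (Z₃, ε₃))) ℓ /
          ((2 * (δ : ℂ) ^ 2) ^ 2 *
            gaugedS S θ sqrtθ (δ : ℂ) η ℓ (Sum.inr (Sum.inl (one, true))))
      = (∑ W, S Z₁ W * S Z₂ W * S Z₃ W / ((δ : ℂ) ^ 2 * (d W : ℂ))) *
          ((∑ W, S Z₁ W * S Z₂ W * S Z₃ W / ((δ : ℂ) ^ 2 * (d W : ℂ)))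
            + sg ε₁ * sg ε₂ * sg ε₃) / 2 :=
  gauged_verlinde_diag_general one S d δ θ sqrtθ η hSsymm hS1 hδ
end

section
/- Applying the Verlinde formula to the gauged modular data S^eq for labels (XY), (Ẑ₁,ε₁), (Ẑ₂,ε₂) gives N_{(XY),(Ẑ₁,ε₁),(Ẑ₂,ε₂)} = Σ_{W∈I} S_{XW} S_{YW} S_{Z₁W} S_{Z₂W} / S_{0W}², where S = S'/δ is the normalized S-matrix of the original modular data and 0 is the unit label. -/
/-!
In the Verlinde sum over gauged labels `ℓ` only the untwisted labels `(W, ε)` survive: the row of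
`(XY)` vanishes on the twisted labels and the rows of `(Ẑᵢ, εᵢ)` vanish on the pair labels. For each
`W` the two signs `ε` contribute `sg ε ^ 2 = 1` each, and the resulting factor `2 · 2 · δ²` against
`(2δ²)²` is exactly the normalisation `S = S'/δ`.
-/

section GaugedS

variable {I : Type} [LinearOrder I] [Fintype I]
  (S : Matrix I I ℂ) (θ sqrtθ : I → ℂ) (δ η : ℂ)

@[simp]
theorem sg_true : sg true = 1 := if_pos rfl

@[simp]
theorem sg_false : sg false = -1 := if_neg Bool.false_ne_true

@[simp]
theorem gaugedS_pair_hat (p : {p : I × I // p.1 < p.2}) (q : I × Bool) :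
    gaugedS S θ sqrtθ δ η (Sum.inl p) (Sum.inr (Sum.inr q)) = 0 := rfl

@[simp]
theorem gaugedS_hat_pair (q : I × Bool) (p : {p : I × I // p.1 < p.2}) :
    gaugedS S θ sqrtθ δ η (Sum.inr (Sum.inr q)) (Sum.inl p) = 0 := rfl

@[simp]
theorem gaugedS_pair_untwisted (p : {p : I × I // p.1 < p.2}) (W : I) (ε : Bool) :
    gaugedS S θ sqrtθ δ η (Sum.inl p) (Sum.inr (Sum.inl (W, ε))) =
      2 * S p.1.1 W * S p.1.2 W := rfl

@[simp]
theorem gaugedS_hat_untwisted (Z W : I) (ε₁ ε : Bool) :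
    gaugedS S θ sqrtθ δ η (Sum.inr (Sum.inr (Z, ε₁))) (Sum.inr (Sum.inl (W, ε))) =
      sg ε * δ * S W Z := rfl

@[simp]
theorem gaugedS_untwisted_untwisted (X Y : I) (ε₁ ε₂ : Bool) :
    gaugedS S θ sqrtθ δ η (Sum.inr (Sum.inl (X, ε₁))) (Sum.inr (Sum.inl (Y, ε₂))) =
      S X Y ^ 2 := rfl

end GaugedS

theorem sum_glabel_of_vanish_off_untwisted {I M : Type} [LinearOrder I] [Fintype I]
    [AddCommMonoid M] {f : GLabel I → M} (hpair : ∀ p, f (Sum.inl p) = 0)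
    (hhat : ∀ q, f (Sum.inr (Sum.inr q)) = 0) :
    ∑ ℓ, f ℓ = ∑ W, ∑ ε, f (Sum.inr (Sum.inl (W, ε))) := by
  simp only [Fintype.sum_sum_type, hpair, hhat, Finset.sum_const_zero, zero_add, add_zero,
    Fintype.sum_prod_type]

theorem gauged_verlinde_pair_hat_general {I : Type} [LinearOrder I] [Fintype I]
    (one : I) (S : Matrix I I ℂ) (δ : ℝ)
    (θ sqrtθ : I → ℂ) (η : ℂ)
    (hSsymm : S.IsSymm) :
    ∀ (X Y : I) (hXY : X < Y) (Z₁ Z₂ : I) (ε₁ ε₂ : Bool),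
      ∑ ℓ : GLabel I,
          gaugedS S θ sqrtθ (δ : ℂ) η (Sum.inl ⟨(X, Y), hXY⟩) ℓ *
          gaugedS S θ sqrtθ (δ : ℂ) η (Sum.inr (Sum.inr (Z₁, ε₁))) ℓ *
          gaugedS S θ sqrtθ (δ : ℂ) η (Sum.inr (Sum.inr (Z₂, ε₂))) ℓ /
          ((2 * (δ : ℂ) ^ 2) ^ 2 *
            gaugedS S θ sqrtθ (δ : ℂ) η ℓ (Sum.inr (Sum.inl (one, true))))
      = ∑ W, (S X W / (δ : ℂ)) * (S Y W / (δ : ℂ)) * (S Z₁ W / (δ : ℂ)) *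
          (S Z₂ W / (δ : ℂ)) / (S one W / (δ : ℂ)) ^ 2 := by
  intro X Y hXY Z₁ Z₂ ε₁ ε₂
  rw [sum_glabel_of_vanish_off_untwisted (by simp) (by simp)]
  refine Finset.sum_congr rfl fun W _ => ?_
  -- Both sides are the same Laurent monomial in `δ` and `S one W`, so no nonvanishing is needed.
  simp only [gaugedS_pair_untwisted, gaugedS_hat_untwisted, gaugedS_untwisted_untwisted,
    Fintype.sum_bool, sg_true, sg_false, hSsymm.apply, div_pow, div_div_eq_mul_div]
  ring

/-- Gauged Verlinde formula for labels `(XY)`, `(Ẑ₁,ε₁)`, `(Ẑ₂,ε₂)`: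
`N_{(XY),(Ẑ₁,ε₁),(Ẑ₂,ε₂)} = Σ_W S_{XW}S_{YW}S_{Z₁W}S_{Z₂W}/S_{0W}²`
with `S = S'/δ` the normalized S-matrix. -/
theorem gauged_verlinde_pair_hat {I : Type} [LinearOrder I] [Fintype I]
    (one : I) (bar : I → I) (S : Matrix I I ℂ) (d : I → ℝ) (δ : ℝ)
    (θ sqrtθ : I → ℂ) (η : ℂ)
    (hbar : ∀ X, bar (bar X) = X) (hbar1 : bar one = one)
    (hSsymm : S.IsSymm)
    (hd : ∀ X, 0 < d X) (hS1 : ∀ X, S one X = (d X : ℂ))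
    (hδ : 0 < δ) (hδ2 : δ ^ 2 = ∑ X, d X ^ 2)
    (hunit : S * S.conjTranspose = ((δ : ℂ) ^ 2) • 1)
    (hθ1 : θ one = 1) (hθbar : ∀ X, θ (bar X) = θ X) (hθne : ∀ X, θ X ≠ 0)
    (hη_def : η = (∑ X, θ X * (d X : ℂ) ^ 2) / (δ : ℂ))
    (hηabs : ‖η‖ = 1)
    (hs4 : S ^ 4 = ((δ : ℂ) ^ 4) • 1)
    (hst3 : (S * Matrix.diagonal θ) ^ 3 = (η⁻¹ * (δ : ℂ)) • S ^ 2)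
    (hsqθ : ∀ X, sqrtθ X ^ 2 = θ X) (hsqθbar : ∀ X, sqrtθ (bar X) = sqrtθ X) :
    ∀ (X Y : I) (hXY : X < Y) (Z₁ Z₂ : I) (ε₁ ε₂ : Bool),
      ∑ ℓ : GLabel I,
          gaugedS S θ sqrtθ (δ : ℂ) η (Sum.inl ⟨(X, Y), hXY⟩) ℓ *
          gaugedS S θ sqrtθ (δ : ℂ) η (Sum.inr (Sum.inr (Z₁, ε₁))) ℓ *
          gaugedS S θ sqrtθ (δ : ℂ) η (Sum.inr (Sum.inr (Z₂, ε₂))) ℓ /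
          ((2 * (δ : ℂ) ^ 2) ^ 2 *
            gaugedS S θ sqrtθ (δ : ℂ) η ℓ (Sum.inr (Sum.inl (one, true))))
      = ∑ W, (S X W / (δ : ℂ)) * (S Y W / (δ : ℂ)) * (S Z₁ W / (δ : ℂ)) *
          (S Z₂ W / (δ : ℂ)) / (S one W / (δ : ℂ)) ^ 2 :=
  gauged_verlinde_pair_hat_general one S δ θ sqrtθ η hSsymm
end

section
/- Let K be the fusion ring of a modular category C (commutative based ring with basis Irr(C)). Define a ℤ/2-graded ring D whose degree-0 part is K ⊗_ℤ K (with basis X⊠Y) and whose degree-1 part is the free ℤ-module on symbols V̂, V ∈ Irr(C), with multiplication determined by: (X⊠Y)(Z⊠W) as in K⊗K; (X⊠Y)·V̂ = V̂·(X⊠Y) = Σ_{U} N^U_{XYV} Û (i.e. the hat of the product XYV in K); and V̂·Ŵ = Σ_{X∈Irr(C)} (X V) ⊠ (X̄ W) (expanded in the basis of K⊗K). Then D is an associative unital ring. -/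
open scoped TensorProduct

/-!
Let `C = Σ_X X ⊗ X̄ ∈ K ⊗ K`, so that `V̂ · Ŵ = C · (V ⊗ W)`. Writing `τ` for the coefficient
of the unit, the duality `τ(X Y) = δ_{Y, X̄}` says that `(X̄)` is the basis dual to `(X)` for the
trace form `τ(x y)`; expanding both sides in these dual bases gives `C · (r ⊗ 1) = C · (1 ⊗ r)`
for all `r ∈ K`, hence `C · e = C · (1 ⊗ m e)` for the multiplication map `m : K ⊗ K → K`.
So every degree-0 product involving `C` collapses to `C · (1 ⊗ k)` with `k` a product in `K`,
and associativity reduces to the commutativity of `K`.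
-/

/-- The multiplication of the ℤ/2-graded extension ring `D = (K ⊗ K) × K`:
degree-0 part `K ⊗ K` multiplies as the tensor-square of the fusion ring `K`;
the degree-1 part (spanned by hats `V̂`, identified with `K` itself) satisfies
`(X⊠Y)·V̂ = V̂·(X⊠Y) = hat(XYV)` and `V̂·Ŵ = Σ_X (XV) ⊠ (X̄W)`. -/
noncomputable def gmul {R : Type} [CommRing R] {B : Type} [Fintype B]
    (b : Module.Basis B ℤ R) (bar : B → B) :
    (R ⊗[ℤ] R) × R → (R ⊗[ℤ] R) × R → (R ⊗[ℤ] R) × R :=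
  fun x y =>
    (x.1 * y.1 + ∑ X : B, (b X * x.2) ⊗ₜ[ℤ] (b (bar X) * y.2),
     LinearMap.mul' ℤ R x.1 * y.2 + LinearMap.mul' ℤ R y.1 * x.2)

section Balanced

variable {S A : Type*} [CommSemiring S] [CommSemiring A] [Algebra S A]

theorem LinearMap.mul'_mul (p q : A ⊗[S] A) :
    LinearMap.mul' S A (p * q) = LinearMap.mul' S A p * LinearMap.mul' S A q := by
  simp only [← Algebra.TensorProduct.lmul'_toLinearMap, AlgHom.toLinearMap_apply, map_mul]

theorem mul_eq_mul_one_tmul_mul' {c : A ⊗[S] A}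
    (hc : ∀ r : A, c * (r ⊗ₜ 1) = c * (1 ⊗ₜ r)) (e : A ⊗[S] A) :
    c * e = c * (1 ⊗ₜ LinearMap.mul' S A e) := by
  induction e using TensorProduct.induction_on with
  | zero => simp
  | tmul x y =>
    calc c * (x ⊗ₜ y) = c * (x ⊗ₜ 1) * (1 ⊗ₜ y) := by
          rw [mul_assoc, Algebra.TensorProduct.tmul_mul_tmul, mul_one, one_mul]
      _ = c * (1 ⊗ₜ (x * y)) := by
          rw [hc, mul_assoc, Algebra.TensorProduct.tmul_mul_tmul, one_mul]
      _ = c * (1 ⊗ₜ LinearMap.mul' S A (x ⊗ₜ y)) := by rw [LinearMap.mul'_apply]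
  | add p q hp hq => rw [mul_add, hp, hq, map_add, TensorProduct.tmul_add, mul_add]

end Balanced

noncomputable def casimir {R : Type} [CommRing R] {B : Type} [Fintype B]
    (b : Module.Basis B ℤ R) (bar : B → B) : R ⊗[ℤ] R :=
  ∑ X : B, b X ⊗ₜ b (bar X)

section Casimir

variable {R : Type} [CommRing R] {B : Type} {b : Module.Basis B ℤ R} {bar : B → B}
  [DecidableEq B] {one : B}

theorem repr_eq_repr_mul_basis_bar (hbar : ∀ X, bar (bar X) = X)
    (hdual : ∀ i j, b.repr (b i * b j) one = if j = bar i then 1 else 0) (p : R) (k : B) :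
    b.repr p k = b.repr (p * b (bar k)) one := by
  have : b.coord k = b.coord one ∘ₗ LinearMap.mulRight ℤ (b (bar k)) := by
    refine b.ext fun i => ?_
    simp only [Module.Basis.coord_apply, LinearMap.comp_apply, LinearMap.mulRight_apply,
      Module.Basis.repr_self, hdual, (Function.Involutive.injective hbar).eq_iff]
    simp [Finsupp.single_apply, eq_comm]
  exact LinearMap.congr_fun this p

variable [Fintype B]

theorem sum_repr_mul_basis_bar_smul (hbar : ∀ X, bar (bar X) = X)
    (hdual : ∀ i j, b.repr (b i * b j) one = if j = bar i then 1 else 0) (p : R) :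
    ∑ k : B, b.repr (p * b (bar k)) one • b k = p := by
  simp only [← repr_eq_repr_mul_basis_bar hbar hdual, b.sum_repr]

theorem sum_repr_mul_basis_smul_bar (hbar : ∀ X, bar (bar X) = X)
    (hdual : ∀ i j, b.repr (b i * b j) one = if j = bar i then 1 else 0) (p : R) :
    ∑ k : B, b.repr (p * b k) one • b (bar k) = p := by
  calc ∑ k : B, b.repr (p * b k) one • b (bar k)
      = ∑ k : B, b.repr (p * b (bar (bar k))) one • b (bar k) := by simp only [hbar]
    _ = ∑ k : B, b.repr (p * b (bar k)) one • b k :=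
        (Function.Involutive.bijective hbar).sum_comp fun k => b.repr (p * b (bar k)) one • b k
    _ = p := sum_repr_mul_basis_bar_smul hbar hdual p

theorem casimir_mul_tmul_one (hbar : ∀ X, bar (bar X) = X)
    (hdual : ∀ i j, b.repr (b i * b j) one = if j = bar i then 1 else 0) (r : R) :
    casimir b bar * (r ⊗ₜ 1) = casimir b bar * (1 ⊗ₜ r) := by
  have expand_left : casimir b bar * (r ⊗ₜ 1) =
      ∑ X : B, ∑ k : B, b.repr (b X * r * b (bar k)) one • (b k ⊗ₜ b (bar X)) := by
    refine Finset.sum_mul .. |>.trans (Finset.sum_congr rfl fun X _ => ?_)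
    conv_lhs => rw [Algebra.TensorProduct.tmul_mul_tmul, mul_one,
      ← sum_repr_mul_basis_bar_smul hbar hdual (b X * r), TensorProduct.sum_tmul]
    simp only [TensorProduct.smul_tmul']
  have expand_right : casimir b bar * (1 ⊗ₜ r) =
      ∑ X : B, ∑ k : B, b.repr (b (bar X) * r * b k) one • (b X ⊗ₜ b (bar k)) := by
    refine Finset.sum_mul .. |>.trans (Finset.sum_congr rfl fun X _ => ?_)
    conv_lhs => rw [Algebra.TensorProduct.tmul_mul_tmul, mul_one,
      ← sum_repr_mul_basis_smul_bar hbar hdual (b (bar X) * r), TensorProduct.tmul_sum]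
    simp only [TensorProduct.tmul_smul]
  rw [expand_left, expand_right, Finset.sum_comm]
  refine Finset.sum_congr rfl fun X _ => Finset.sum_congr rfl fun k _ => ?_
  rw [show b k * r * b (bar X) = b (bar X) * r * b k by ring]

end Casimir

section Gmul

variable {R : Type} [CommRing R] {B : Type} [Fintype B] (b : Module.Basis B ℤ R) (bar : B → B)

theorem gmul_eq (x y : (R ⊗[ℤ] R) × R) :
    gmul b bar x y = (x.1 * y.1 + casimir b bar * (x.2 ⊗ₜ y.2),
      LinearMap.mul' ℤ R x.1 * y.2 + LinearMap.mul' ℤ R y.1 * x.2) := by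
  simp only [gmul, casimir, Finset.sum_mul, Algebra.TensorProduct.tmul_mul_tmul]

theorem gmul_one_left (x : (R ⊗[ℤ] R) × R) : gmul b bar (1, 0) x = x := by
  simp [gmul_eq, ← Algebra.TensorProduct.lmul'_toLinearMap]

theorem gmul_one_right (x : (R ⊗[ℤ] R) × R) : gmul b bar x (1, 0) = x := by
  simp [gmul_eq, ← Algebra.TensorProduct.lmul'_toLinearMap]

theorem gmul_add (x y z : (R ⊗[ℤ] R) × R) :
    gmul b bar x (y + z) = gmul b bar x y + gmul b bar x z := by
  simp only [gmul_eq, Prod.fst_add, Prod.snd_add, Prod.mk_add_mk, map_add,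
    TensorProduct.tmul_add, mul_add]
  ext <;> simp only <;> ring

theorem add_gmul (x y z : (R ⊗[ℤ] R) × R) :
    gmul b bar (x + y) z = gmul b bar x z + gmul b bar y z := by
  simp only [gmul_eq, Prod.fst_add, Prod.snd_add, Prod.mk_add_mk, map_add,
    TensorProduct.add_tmul, mul_add, add_mul]
  ext <;> simp only <;> ring

variable {b bar}

theorem gmul_assoc (hc : ∀ r : R, casimir b bar * (r ⊗ₜ 1) = casimir b bar * (1 ⊗ₜ r))
    (x y z : (R ⊗[ℤ] R) × R) :
    gmul b bar (gmul b bar x y) z = gmul b bar x (gmul b bar y z) := by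
  obtain ⟨x, u⟩ := x
  obtain ⟨y, v⟩ := y
  obtain ⟨z, w⟩ := z
  simp only [gmul_eq, Prod.mk.injEq]
  set C := casimir b bar
  have absorb := mul_eq_mul_one_tmul_mul' hc
  constructor
  · rw [add_mul, mul_add x, mul_assoc C, mul_left_comm x C, add_assoc, add_assoc, ← mul_add C,
      ← mul_add C, mul_assoc x y z, absorb (_ + _), absorb (_ + _)]
    congr 3
    simp only [map_add, LinearMap.mul'_mul, LinearMap.mul'_apply]
    ring
  · simp only [map_add, LinearMap.mul'_mul, LinearMap.mul'_apply]
    ring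

end Gmul

theorem gmul_ring_general {R : Type} [CommRing R] {B : Type} [Fintype B] [DecidableEq B]
    (b : Module.Basis B ℤ R) (one : B) (bar : B → B)
    (hbar : ∀ X, bar (bar X) = X)
    (hdual : ∀ i j, b.repr (b i * b j) one = if j = bar i then 1 else 0) :
    (∀ x y z, gmul b bar (gmul b bar x y) z = gmul b bar x (gmul b bar y z)) ∧
    (∀ x, gmul b bar (1, 0) x = x ∧ gmul b bar x (1, 0) = x) ∧
    (∀ x y z, gmul b bar x (y + z) = gmul b bar x y + gmul b bar x z) ∧
    (∀ x y z, gmul b bar (x + y) z = gmul b bar x z + gmul b bar y z) :=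
  ⟨gmul_assoc (casimir_mul_tmul_one hbar hdual),
    fun x => ⟨gmul_one_left b bar x, gmul_one_right b bar x⟩,
    gmul_add b bar, add_gmul b bar⟩

/-- The ℤ/2-graded extension `D` of the fusion ring `K ⊗ K` by the hats `V̂`
is an associative unital ring: `gmul` is associative, has `(1, 0)` as a
two-sided unit, and is bi-additive. -/
theorem gmul_ring {R : Type} [CommRing R] {B : Type} [Fintype B] [DecidableEq B]
    (b : Module.Basis B ℤ R) (one : B) (bar : B → B)
    (hone : b one = 1)
    (hbar : ∀ X, bar (bar X) = X)
    (hN : ∀ i j k, 0 ≤ b.repr (b i * b j) k)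
    (hdual : ∀ i j, b.repr (b i * b j) one = if j = bar i then 1 else 0) :
    (∀ x y z, gmul b bar (gmul b bar x y) z = gmul b bar x (gmul b bar y z)) ∧
    (∀ x, gmul b bar (1, 0) x = x ∧ gmul b bar x (1, 0) = x) ∧
    (∀ x y z, gmul b bar x (y + z) = gmul b bar x y + gmul b bar x z) ∧
    (∀ x y z, gmul b bar (x + y) z = gmul b bar x z + gmul b bar y z) :=
  gmul_ring_general b one bar hbar hdual
end

section
/- Let s be a symmetric unitary matrix with s⁴ = I, C := s² a permutation matrix, and t a diagonal invertible matrix commuting with C, satisfying the normalized modular relation (st)³ = s². Let t^{1/2} be a diagonal square root of t commuting with C. Then Bantay's matrix P := t^{1/2} s t² s t^{1/2} is symmetric and satisfies P² = C. -/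
lemma diag_mul_comm {n : Type} [Fintype n] [DecidableEq n]
    {A B : Matrix n n ℂ} (hA : A.IsDiag) (hB : B.IsDiag) : A * B = B * A := by
  ext i j
  simp only [Matrix.mul_apply]
  rcases eq_or_ne i j with rfl | hij
  · rw [Finset.sum_eq_single i, Finset.sum_eq_single i]
    · ring
    · intro k _ hk; rw [hB hk.symm, zero_mul]
    · intro h; exact absurd (Finset.mem_univ i) h
    · intro k _ hk; rw [hA hk.symm, zero_mul]
    · intro h; exact absurd (Finset.mem_univ i) h
  · rw [Finset.sum_eq_zero, Finset.sum_eq_zero]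
    · intro k _
      rcases eq_or_ne i k with rfl | h
      · rw [hA hij, mul_zero]
      · rw [hB h, zero_mul]
    · intro k _
      rcases eq_or_ne i k with rfl | h
      · rw [hB hij, mul_zero]
      · rw [hA h, zero_mul]

/-- Bantay's matrix `P := t^{1/2} s t² s t^{1/2}` built from normalized modular
data (`s` symmetric unitary, `s⁴ = 1`, `C := s²`, `t` diagonal invertible
commuting with `C`, `(st)³ = s²`, `t^{1/2}` a diagonal square root of `t`
commuting with `C`) is symmetric and satisfies `P² = C`. -/
theorem bantayP_symm_sq {n : Type} [Fintype n] [DecidableEq n]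
    (s t t2 : Matrix n n ℂ)
    (hs_symm : s.IsSymm) (hs_unit : s * s.conjTranspose = 1) (hs4 : s ^ 4 = 1)
    (ht_diag : t.IsDiag) (ht_inv : IsUnit t.det)
    (hCt : s ^ 2 * t = t * s ^ 2)
    (hst : (s * t) ^ 3 = s ^ 2)
    (ht2_diag : t2.IsDiag) (ht2_sq : t2 * t2 = t)
    (hCt2 : s ^ 2 * t2 = t2 * s ^ 2) :
    (t2 * s * t ^ 2 * s * t2).IsSymm ∧
    (t2 * s * t ^ 2 * s * t2) ^ 2 = s ^ 2 := by
  have h31 : s ^ 3 * s = 1 := by rw [← pow_succ]; exact hs4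
  have h13 : s * s ^ 3 = 1 := by rw [← pow_mul_comm']; exact h31
  have hsu : IsUnit s := ⟨⟨s, s ^ 3, h13, h31⟩, rfl⟩
  have htu : IsUnit t := (Matrix.isUnit_iff_isUnit_det t).mpr ht_inv
  have hst' : s * t * (s * t) * (s * t) = s * s := by
    have h := hst
    rw [pow_succ, pow_succ, pow_one, sq] at h
    exact h
  -- tstst = s
  have h5 : t * (s * (t * (s * t))) = s := by
    apply hsu.mul_left_cancel
    calc s * (t * (s * (t * (s * t)))) = s * t * (s * t) * (s * t) := by
          simp only [mul_assoc]
      _ = s * s := hst'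
  -- key: s t² s t s t² s t = s²
  have hkey : s * t ^ 2 * s * t * (s * t ^ 2 * s * t) = s ^ 2 := by
    calc s * t ^ 2 * s * t * (s * t ^ 2 * s * t)
        = s * (t * ((t * (s * (t * (s * t)))) * (t * (s * t)))) := by
          rw [sq]; simp only [mul_assoc]
      _ = s * (t * (s * (t * (s * t)))) := by rw [h5, h5]
      _ = s * t * (s * t) * (s * t) := by simp only [mul_assoc]
      _ = s ^ 2 := by rw [hst', sq]
  constructor
  · -- symmetry
    have hts : t.IsSymm := ht_diag.isSymm
    have ht2s : t2.IsSymm := ht2_diag.isSymm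
    unfold Matrix.IsSymm at *
    simp only [Matrix.transpose_mul, Matrix.transpose_pow, hs_symm, hts, ht2s]
    simp only [mul_assoc]
  · -- P² = s²
    apply htu.mul_right_cancel
    have htt2 : t2 * t = t * t2 := diag_mul_comm ht2_diag ht_diag
    calc (t2 * s * t ^ 2 * s * t2) ^ 2 * t
        = t2 * (s * t ^ 2 * s * (t2 * t2) * (s * t ^ 2 * s * (t2 * t))) := by
          rw [sq]; simp only [mul_assoc]
      _ = t2 * (s * t ^ 2 * s * t * (s * t ^ 2 * s * (t * t2))) := by
          rw [ht2_sq, htt2]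
      _ = t2 * (s * t ^ 2 * s * t * (s * t ^ 2 * s * t)) * t2 := by
          simp only [mul_assoc]
      _ = t2 * s ^ 2 * t2 := by rw [hkey]
      _ = s ^ 2 * (t2 * t2) := by rw [← hCt2]; simp only [mul_assoc]
      _ = s ^ 2 * t := by rw [ht2_sq]
end
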